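/- arXiv:1406.0155 — 5 statements merged into one kernel-verified Lean document; each statement's English description precedes it below -/
import Mathlib

section
/- Let K₁ and K₂ be finite knowledge bases with K₁ ∩ K₂ = ∅ and such that MUSes(K₁ ∪ K₂) = MUSes(K₁) ⊎ MUSes(K₂) (a disjoint union). Then M is a maximal satisfiable subset of K₁ ∪ K₂ if and only if M = M₁ ∪ M₂ where M₁ is a maximal satisfiable subset of K₁ and M₂ is a maximal satisfiable subset of K₂. -/
inductive PropForm (V : Type) : Type
  | var : V → PropForm V
  | neg : PropForm V → PropForm V
  | conj : PropForm V → PropForm V → PropForm V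
  | disj : PropForm V → PropForm V → PropForm V
  deriving DecidableEq

namespace PropForm
def eval {V : Type} (v : V → Bool) : PropForm V → Bool
  | var p => v p
  | neg f => !(eval v f)
  | conj f g => eval v f && eval v g
  | disj f g => eval v f || eval v g
end PropForm

/-- A finite knowledge base `K` is satisfiable (consistent) if some valuation makes
all its formulas true. -/
def Sat {V : Type} (K : Finset (PropForm V)) : Prop :=
  ∃ v : V → Bool, ∀ f ∈ K, f.eval v = true

/-- `M` is a minimal unsatisfiable set: inconsistent, with every proper subset consistent. -/
def IsMUS {V : Type} (M : Finset (PropForm V)) : Prop :=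
  ¬ Sat M ∧ ∀ M' ⊂ M, Sat M'

/-- The set of minimal unsatisfiable subsets of `K`. -/
def MUSes {V : Type} (K : Finset (PropForm V)) : Set (Finset (PropForm V)) :=
  {M | M ⊆ K ∧ IsMUS M}

/-- `M` is a maximal satisfiable subset of `K`. -/
def IsMSSof {V : Type} [DecidableEq V] (K M : Finset (PropForm V)) : Prop :=
  M ⊆ K ∧ Sat M ∧ ∀ a ∈ K, a ∉ M → ¬ Sat (insert a M)

/-- The set of maximal satisfiable subsets of `K`. -/
def MSSes {V : Type} [DecidableEq V] (K : Finset (PropForm V)) : Set (Finset (PropForm V)) :=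
  {M | IsMSSof K M}


/-!
If the minimal unsatisfiable subsets of `K₁ ∪ K₂` all lie inside `K₁` or inside `K₂`, then a subset
`S` of `K₁ ∪ K₂` is satisfiable exactly when both `S ∩ K₁` and `S ∩ K₂` are: an unsatisfiable `S`
contains a minimal unsatisfiable subset, which then sits in one of the two halves. Satisfiability
thus splits along the partition, and so do the maximal satisfiable subsets.
-/

theorem Sat.mono {V : Type} {S T : Finset (PropForm V)} (hST : S ⊆ T) : Sat T → Sat S :=
  fun ⟨v, hv⟩ => ⟨v, fun f hf => hv f (hST hf)⟩

theorem exists_isMUS_subset_of_not_sat {V : Type} {S : Finset (PropForm V)} (hS : ¬ Sat S) :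
    ∃ M ⊆ S, IsMUS M := by
  induction S using Finset.strongInduction with
  | _ S ih =>
    by_cases hmin : ∃ S' ⊂ S, ¬ Sat S'
    · obtain ⟨S', hS'S, hS'⟩ := hmin
      obtain ⟨M, hMS', hM⟩ := ih S' hS'S hS'
      exact ⟨M, hMS'.trans hS'S.subset, hM⟩
    · exact ⟨S, subset_rfl, hS, fun S' hS'S => not_not.mp fun hS' => hmin ⟨S', hS'S, hS'⟩⟩

section Split

variable {V : Type} [DecidableEq V] {K₁ K₂ : Finset (PropForm V)}

theorem sat_iff_sat_inter_and_sat_inter (hmus : MUSes (K₁ ∪ K₂) = MUSes K₁ ∪ MUSes K₂)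
    {S : Finset (PropForm V)} (hS : S ⊆ K₁ ∪ K₂) :
    Sat S ↔ Sat (S ∩ K₁) ∧ Sat (S ∩ K₂) := by
  refine ⟨fun h => ⟨h.mono Finset.inter_subset_left, h.mono Finset.inter_subset_left⟩, ?_⟩
  rintro ⟨h₁, h₂⟩
  by_contra hS'
  obtain ⟨M, hMS, hM⟩ := exists_isMUS_subset_of_not_sat hS'
  have hM' : M ∈ MUSes (K₁ ∪ K₂) := ⟨hMS.trans hS, hM⟩
  rw [hmus] at hM'
  rcases hM' with ⟨hMK, -⟩ | ⟨hMK, -⟩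
  · exact hM.1 (h₁.mono (Finset.subset_inter hMS hMK))
  · exact hM.1 (h₂.mono (Finset.subset_inter hMS hMK))

theorem IsMSSof.inter_left (hdisj : Disjoint K₁ K₂)
    (hmus : MUSes (K₁ ∪ K₂) = MUSes K₁ ∪ MUSes K₂) {M : Finset (PropForm V)}
    (hM : IsMSSof (K₁ ∪ K₂) M) : IsMSSof K₁ (M ∩ K₁) := by
  obtain ⟨hMK, hsat, hmax⟩ := hM
  refine ⟨Finset.inter_subset_right, hsat.mono Finset.inter_subset_left, fun a ha₁ haM₁ hins => ?_⟩
  have haM : a ∉ M := fun h => haM₁ (Finset.mem_inter.mpr ⟨h, ha₁⟩)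
  have ha₂ : a ∉ K₂ := Finset.disjoint_left.mp hdisj ha₁
  refine hmax a (Finset.mem_union_left _ ha₁) haM ?_
  rw [sat_iff_sat_inter_and_sat_inter hmus (Finset.insert_subset (Finset.mem_union_left _ ha₁) hMK),
    Finset.insert_inter_of_mem ha₁, Finset.insert_inter_of_notMem ha₂]
  exact ⟨hins, hsat.mono Finset.inter_subset_left⟩

theorem IsMSSof.inter_right (hdisj : Disjoint K₁ K₂)
    (hmus : MUSes (K₁ ∪ K₂) = MUSes K₁ ∪ MUSes K₂) {M : Finset (PropForm V)}
    (hM : IsMSSof (K₁ ∪ K₂) M) : IsMSSof K₂ (M ∩ K₂) := by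
  rw [Finset.union_comm] at hM hmus
  rw [Set.union_comm] at hmus
  exact hM.inter_left hdisj.symm hmus

theorem IsMSSof.union (hdisj : Disjoint K₁ K₂)
    (hmus : MUSes (K₁ ∪ K₂) = MUSes K₁ ∪ MUSes K₂) {M₁ M₂ : Finset (PropForm V)}
    (h₁ : IsMSSof K₁ M₁) (h₂ : IsMSSof K₂ M₂) : IsMSSof (K₁ ∪ K₂) (M₁ ∪ M₂) := by
  obtain ⟨hM₁, hsat₁, hmax₁⟩ := h₁
  obtain ⟨hM₂, hsat₂, hmax₂⟩ := h₂
  have hM : M₁ ∪ M₂ ⊆ K₁ ∪ K₂ := Finset.union_subset_union hM₁ hM₂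
  have hinter₁ : (M₁ ∪ M₂) ∩ K₁ = M₁ := by
    rw [Finset.union_inter_distrib_right, Finset.inter_eq_left.mpr hM₁,
      Finset.disjoint_iff_inter_eq_empty.mp (hdisj.symm.mono_left hM₂), Finset.union_empty]
  have hinter₂ : (M₁ ∪ M₂) ∩ K₂ = M₂ := by
    rw [Finset.union_inter_distrib_right, Finset.inter_eq_left.mpr hM₂,
      Finset.disjoint_iff_inter_eq_empty.mp (hdisj.mono_left hM₁), Finset.empty_union]
  refine ⟨hM, ?_, fun a ha haM hins => ?_⟩
  · rw [sat_iff_sat_inter_and_sat_inter hmus hM, hinter₁, hinter₂]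
    exact ⟨hsat₁, hsat₂⟩
  · rcases Finset.mem_union.mp ha with ha₁ | ha₂
    · exact hmax₁ a ha₁ (fun h => haM (Finset.mem_union_left _ h))
        (hins.mono (Finset.insert_subset_insert a Finset.subset_union_left))
    · exact hmax₂ a ha₂ (fun h => haM (Finset.mem_union_right _ h))
        (hins.mono (Finset.insert_subset_insert a Finset.subset_union_right))

end Split

theorem stmt3_general {V : Type} [DecidableEq V] (K1 K2 : Finset (PropForm V))
    (hdisj : K1 ∩ K2 = ∅)
    (hmus : MUSes (K1 ∪ K2) = MUSes K1 ∪ MUSes K2) :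
    ∀ M : Finset (PropForm V),
      IsMSSof (K1 ∪ K2) M ↔
        ∃ M1 M2, IsMSSof K1 M1 ∧ IsMSSof K2 M2 ∧ M = M1 ∪ M2 := by
  have hdisj' : Disjoint K1 K2 := Finset.disjoint_iff_inter_eq_empty.mpr hdisj
  intro M
  constructor
  · intro hM
    refine ⟨M ∩ K1, M ∩ K2, hM.inter_left hdisj' hmus, hM.inter_right hdisj' hmus, ?_⟩
    rw [← Finset.inter_union_distrib_left, Finset.inter_eq_left.mpr hM.1]
  · rintro ⟨M1, M2, h1, h2, rfl⟩
    exact h1.union hdisj' hmus h2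

theorem stmt3 {V : Type} [DecidableEq V] (K1 K2 : Finset (PropForm V))
    (hdisj : K1 ∩ K2 = ∅)
    (hmus : MUSes (K1 ∪ K2) = MUSes K1 ∪ MUSes K2)
    (hmusdisj : Disjoint (MUSes K1) (MUSes K2)) :
    ∀ M : Finset (PropForm V),
      IsMSSof (K1 ∪ K2) M ↔
        ∃ M1 M2, IsMSSof K1 M1 ∧ IsMSSof K2 M2 ∧ M = M1 ∪ M2 :=
  stmt3_general K1 K2 hdisj hmus
end

section
/- Let K = K₁ ∪ ⋯ ∪ Kₙ be finite knowledge bases such that MUSes(K) is the disjoint union of MUSes(K₁), …, MUSes(Kₙ), and the Kᵢ are pairwise disjoint. Then the number of maximal satisfiable subsets of K equals the product of the numbers of maximal satisfiable subsets of the Kᵢ: |MSSes(K)| = |MSSes(K₁)| × ⋯ × |MSSes(Kₙ)|. -/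
open Function

theorem Sat.mono_s4 {V : Type} {M N : Finset (PropForm V)} (hM : Sat M) (h : N ⊆ M) : Sat N :=
  let ⟨v, hv⟩ := hM
  ⟨v, fun f hf => hv f (h hf)⟩

theorem exists_subset_isMUS_of_not_sat {V : Type} (M : Finset (PropForm V)) (hM : ¬ Sat M) :
    ∃ N ⊆ M, IsMUS N := by
  induction M using Finset.strongInduction with
  | H M ih =>
    by_cases hmin : ∀ M' ⊂ M, Sat M'
    · exact ⟨M, subset_rfl, hM, hmin⟩
    · push Not at hmin
      obtain ⟨M', hM'M, hM'⟩ := hmin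
      obtain ⟨N, hNM', hN⟩ := ih M' hM'M hM'
      exact ⟨N, hNM'.trans hM'M.subset, hN⟩

theorem Finset.sup_inter_of_pairwise_disjoint {α ι : Type*} [DecidableEq α] [Fintype ι]
    {s t : ι → Finset α} (hs : Pairwise (Disjoint on s)) (hts : ∀ i, t i ⊆ s i) (i : ι) :
    Finset.univ.sup t ∩ s i = t i := by
  ext x
  simp only [Finset.mem_inter, Finset.mem_sup, Finset.mem_univ, true_and]
  constructor
  · rintro ⟨⟨j, hxj⟩, hxi⟩
    obtain rfl | hji := eq_or_ne j i
    · exact hxj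
    · exact absurd hxi (Finset.disjoint_left.mp (hs hji) (hts j hxj))
  · exact fun hxi => ⟨⟨i, hxi⟩, hts i hxi⟩

section Decomposition

variable {V : Type} [DecidableEq V] {ι : Type*} [Fintype ι] {K : ι → Finset (PropForm V)}

theorem sat_iff_forall_sat_inter (hmus : MUSes (Finset.univ.sup K) = ⋃ i, MUSes (K i))
    {M : Finset (PropForm V)} (hM : M ⊆ Finset.univ.sup K) :
    Sat M ↔ ∀ i, Sat (M ∩ K i) := by
  refine ⟨fun hsat i => hsat.mono_s4 Finset.inter_subset_left, fun hsat => ?_⟩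
  by_contra hunsat
  obtain ⟨N, hNM, hN⟩ := exists_subset_isMUS_of_not_sat M hunsat
  have hNmus : N ∈ ⋃ i, MUSes (K i) := hmus ▸ ⟨hNM.trans hM, hN⟩
  obtain ⟨i, hNKi, -⟩ := Set.mem_iUnion.mp hNmus
  exact hN.1 ((hsat i).mono_s4 (Finset.subset_inter hNM hNKi))

theorem isMSSof_sup_iff (hK : Pairwise (Disjoint on K))
    (hmus : MUSes (Finset.univ.sup K) = ⋃ i, MUSes (K i))
    {M : Finset (PropForm V)} (hM : M ⊆ Finset.univ.sup K) :
    IsMSSof (Finset.univ.sup K) M ↔ ∀ i, IsMSSof (K i) (M ∩ K i) := by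
  have hsat := sat_iff_forall_sat_inter hmus hM
  constructor
  · rintro ⟨-, hMsat, hMmax⟩ i
    refine ⟨Finset.inter_subset_right, hsat.mp hMsat i, fun a ha haMi => ?_⟩
    have haM : a ∉ M := fun h => haMi (Finset.mem_inter.mpr ⟨h, ha⟩)
    have haK : a ∈ Finset.univ.sup K := Finset.le_sup (f := K) (Finset.mem_univ i) ha
    obtain ⟨j, hj⟩ : ∃ j, ¬ Sat (insert a M ∩ K j) := by
      have := hMmax a haK haM
      rwa [sat_iff_forall_sat_inter hmus (Finset.insert_subset haK hM), not_forall] at this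
    obtain rfl | hji := eq_or_ne j i
    · rwa [Finset.insert_inter_of_mem ha] at hj
    · have haj : a ∉ K j := Finset.disjoint_right.mp (hK hji) ha
      exact absurd (hsat.mp hMsat j) (Finset.insert_inter_of_notMem haj ▸ hj)
  · intro hMi
    refine ⟨hM, hsat.mpr fun i => (hMi i).2.1, fun a ha haM hsat' => ?_⟩
    obtain ⟨i, -, hai⟩ := Finset.mem_sup.mp ha
    refine (hMi i).2.2 a hai (fun h => haM (Finset.mem_inter.mp h).1) ?_
    exact Finset.insert_inter_of_mem hai ▸ hsat'.mono_s4 Finset.inter_subset_left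

def mssesSupEquiv (hK : Pairwise (Disjoint on K))
    (hmus : MUSes (Finset.univ.sup K) = ⋃ i, MUSes (K i)) :
    MSSes (Finset.univ.sup K) ≃ ∀ i, MSSes (K i) where
  toFun M i := ⟨M.1 ∩ K i, (isMSSof_sup_iff hK hmus M.2.1).mp M.2 i⟩
  invFun t := ⟨Finset.univ.sup fun i => (t i).1, by
    have hsub : Finset.univ.sup (fun i => (t i).1) ⊆ Finset.univ.sup K :=
      Finset.sup_mono_fun fun i _ => (t i).2.1
    refine (isMSSof_sup_iff hK hmus hsub).mpr fun i => ?_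
    rw [Finset.sup_inter_of_pairwise_disjoint hK (fun j => (t j).2.1)]
    exact (t i).2⟩
  left_inv M := Subtype.ext <| by
    simp only [← Finset.inf_eq_inter, ← Finset.sup_inf_distrib_left]
    exact inf_eq_left.mpr M.2.1
  right_inv t := funext fun i =>
    Subtype.ext (Finset.sup_inter_of_pairwise_disjoint hK (fun j => (t j).2.1) i)

end Decomposition

theorem stmt4_general {V : Type} [DecidableEq V] (n : ℕ) (K : Fin n → Finset (PropForm V))
    (hdisj : ∀ i j, i ≠ j → Disjoint (K i) (K j))
    (hmus : MUSes (Finset.univ.sup K) = ⋃ i, MUSes (K i)) :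
    (MSSes (Finset.univ.sup K)).ncard = ∏ i, (MSSes (K i)).ncard := by
  simp only [← Nat.card_coe_set_eq]
  rw [Nat.card_congr (mssesSupEquiv (fun i j => hdisj i j) hmus), Nat.card_pi]

theorem stmt4 {V : Type} [DecidableEq V] (n : ℕ) (K : Fin n → Finset (PropForm V))
    (hdisj : ∀ i j, i ≠ j → Disjoint (K i) (K j))
    (hmus : MUSes (Finset.univ.sup K) = ⋃ i, MUSes (K i))
    (hmusdisj : ∀ i j, i ≠ j → Disjoint (MUSes (K i)) (MUSes (K j))) :
    (MSSes (Finset.univ.sup K)).ncard = ∏ i, (MSSes (K i)).ncard :=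
  stmt4_general n K hdisj hmus
end

section
/- Every inconsistent finite knowledge base K has a unique MUS-decomposition, i.e., a unique family {K₁, …, Kₚ} such that K = K₁ ∪ ⋯ ∪ Kₚ ∪ free(K) and the sets MUSes(Kᵢ) are exactly the connected components of the MUS-graph of K. -/
/-- The MUS-graph of `K`: vertices are the MUSes of `K`, with an edge between two
distinct MUSes iff they intersect. -/
def MUSGraph {V : Type} [DecidableEq V] (K : Finset (PropForm V)) :
    SimpleGraph {M : Finset (PropForm V) // M ∈ MUSes K} :=
  SimpleGraph.fromRel fun M M' => (M.1 ∩ M'.1).Nonempty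

/-- The set of MUSes lying in the connected component `c` of the MUS-graph of `K`. -/
def compMUSes {V : Type} [DecidableEq V] (K : Finset (PropForm V))
    (c : (MUSGraph K).ConnectedComponent) : Set (Finset (PropForm V)) :=
  {M | ∃ h : M ∈ MUSes K, (MUSGraph K).connectedComponentMk ⟨M, h⟩ = c}

/-- The free formulas of `K`: those belonging to no MUS of `K`. -/
def freeSet {V : Type} (K : Finset (PropForm V)) : Set (PropForm V) :=
  {a | a ∈ K ∧ ∀ M ∈ MUSes K, a ∉ M}

/-- `D` is a MUS-decomposition of `K`: `K` is the union of the members of `D` together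
with the free formulas, each member is a union of its own MUSes, and the families
`MUSes Ki` for `Ki ∈ D` are exactly the connected components of the MUS-graph of `K`. -/
def IsMUSdecomp {V : Type} [DecidableEq V] (K : Finset (PropForm V))
    (D : Set (Finset (PropForm V))) : Prop :=
  ((↑K : Set (PropForm V)) = (⋃ Ki ∈ D, (↑Ki : Set (PropForm V))) ∪ freeSet K) ∧
  (∀ Ki ∈ D, (↑Ki : Set (PropForm V)) = ⋃ M ∈ MUSes Ki, (↑M : Set (PropForm V))) ∧
  (∀ Ki ∈ D, ∃ c, MUSes Ki = compMUSes K c) ∧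
  (∀ c, ∃ Ki ∈ D, MUSes Ki = compMUSes K c)


/-!
Each member `Kᵢ` of a MUS-decomposition equals the union of its own MUSes, so it is determined
by `MUSes Kᵢ`, i.e. by a connected component of the MUS-graph; hence the only candidate is the
family of unions of the components. Conversely, the union of a component has exactly that
component as its MUSes: an MUS inside the union is nonempty and so meets some MUS of the
component, which makes it adjacent (or equal) to it.
-/

open Classical in
noncomputable def compUnion {V : Type} [DecidableEq V] (K : Finset (PropForm V))
    (c : (MUSGraph K).ConnectedComponent) : Finset (PropForm V) :=
  K.filter fun a => ∃ M ∈ compMUSes K c, a ∈ M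

lemma sat_empty {V : Type} : Sat (∅ : Finset (PropForm V)) :=
  ⟨fun _ => true, by simp⟩

lemma IsMUS.nonempty {V : Type} {M : Finset (PropForm V)} (hM : IsMUS M) : M.Nonempty :=
  Finset.nonempty_iff_ne_empty.2 fun hM0 => hM.1 (hM0 ▸ sat_empty)

section

variable {V : Type} [DecidableEq V] {K : Finset (PropForm V)}

lemma compUnion_subset (c : (MUSGraph K).ConnectedComponent) : compUnion K c ⊆ K := by
  classical
  exact Finset.filter_subset _ _

lemma mem_compUnion {c : (MUSGraph K).ConnectedComponent} {a : PropForm V} :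
    a ∈ compUnion K c ↔ ∃ M ∈ compMUSes K c, a ∈ M := by
  classical
  simp only [compUnion, Finset.mem_filter, and_iff_right_iff_imp]
  rintro ⟨M, ⟨hM, -⟩, haM⟩
  exact hM.1 haM

lemma coe_compUnion (c : (MUSGraph K).ConnectedComponent) :
    (↑(compUnion K c) : Set (PropForm V)) =
      ⋃ M ∈ compMUSes K c, (↑M : Set (PropForm V)) := by
  ext a
  simp only [Finset.mem_coe, mem_compUnion, Set.mem_iUnion, exists_prop]

lemma connectedComponentMk_eq_of_inter_nonempty {M M' : Finset (PropForm V)}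
    (hM : M ∈ MUSes K) (hM' : M' ∈ MUSes K) (hMM' : (M ∩ M').Nonempty) :
    (MUSGraph K).connectedComponentMk ⟨M, hM⟩ =
      (MUSGraph K).connectedComponentMk ⟨M', hM'⟩ := by
  by_cases heq : M = M'
  · subst heq; rfl
  · refine SimpleGraph.ConnectedComponent.sound (SimpleGraph.Adj.reachable ?_)
    rw [MUSGraph, SimpleGraph.fromRel_adj]
    exact ⟨fun h => heq (congrArg Subtype.val h), Or.inl hMM'⟩

lemma muses_compUnion (c : (MUSGraph K).ConnectedComponent) :
    MUSes (compUnion K c) = compMUSes K c := by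
  ext M
  constructor
  · rintro ⟨hsub, hmus⟩
    have hMK : M ∈ MUSes K := ⟨hsub.trans (compUnion_subset c), hmus⟩
    obtain ⟨a, haM⟩ := hmus.nonempty
    obtain ⟨M', ⟨hM'K, rfl⟩, haM'⟩ := mem_compUnion.1 (hsub haM)
    exact ⟨hMK, connectedComponentMk_eq_of_inter_nonempty hMK hM'K
      ⟨a, Finset.mem_inter.2 ⟨haM, haM'⟩⟩⟩
  · intro hM
    exact ⟨fun a haM => mem_compUnion.2 ⟨M, hM, haM⟩, hM.1.2⟩

lemma coe_eq_union_freeSet :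
    (↑K : Set (PropForm V)) =
      (⋃ Ki ∈ Set.range (compUnion K), (↑Ki : Set (PropForm V))) ∪ freeSet K := by
  ext a
  simp only [Finset.mem_coe, Set.mem_union, Set.biUnion_range, Set.mem_iUnion, mem_compUnion]
  constructor
  · intro haK
    by_cases hcov : ∃ M ∈ MUSes K, a ∈ M
    · obtain ⟨M, hM, haM⟩ := hcov
      exact Or.inl ⟨_, M, ⟨hM, rfl⟩, haM⟩
    · exact Or.inr ⟨haK, fun M hM haM => hcov ⟨M, hM, haM⟩⟩
  · rintro (⟨c, M, ⟨hM, -⟩, haM⟩ | hfree)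
    · exact hM.1 haM
    · exact hfree.1

lemma isMUSdecomp_range_compUnion : IsMUSdecomp K (Set.range (compUnion K)) := by
  refine ⟨coe_eq_union_freeSet, ?_, ?_, fun c => ⟨_, ⟨c, rfl⟩, muses_compUnion c⟩⟩
  · rintro _ ⟨c, rfl⟩
    rw [coe_compUnion, muses_compUnion]
  · rintro _ ⟨c, rfl⟩
    exact ⟨c, muses_compUnion c⟩

lemma IsMUSdecomp.eq_compUnion {D : Set (Finset (PropForm V))} (hD : IsMUSdecomp K D)
    {Ki : Finset (PropForm V)} (hKi : Ki ∈ D) {c : (MUSGraph K).ConnectedComponent}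
    (hc : MUSes Ki = compMUSes K c) : Ki = compUnion K c :=
  Finset.coe_injective <| by rw [hD.2.1 Ki hKi, hc, coe_compUnion]

lemma IsMUSdecomp.eq_range_compUnion {D : Set (Finset (PropForm V))} (hD : IsMUSdecomp K D) :
    D = Set.range (compUnion K) := by
  ext Ki
  constructor
  · intro hKi
    obtain ⟨c, hc⟩ := hD.2.2.1 Ki hKi
    exact ⟨c, (hD.eq_compUnion hKi hc).symm⟩
  · rintro ⟨c, rfl⟩
    obtain ⟨Ki, hKi, hc⟩ := hD.2.2.2 c
    exact hD.eq_compUnion hKi hc ▸ hKi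

end

theorem stmt5_general {V : Type} [DecidableEq V] (K : Finset (PropForm V)) :
    ∃! D : Set (Finset (PropForm V)), IsMUSdecomp K D :=
  ⟨_, isMUSdecomp_range_compUnion, fun _ hD => hD.eq_range_compUnion⟩

theorem stmt5 {V : Type} [DecidableEq V] (K : Finset (PropForm V)) (h : ¬ Sat K) :
    ∃! D : Set (Finset (PropForm V)), IsMUSdecomp K D :=
  stmt5_general K
end

section
/- The distribution-based inconsistency measure I_D satisfies MinInc: if M is a minimal unsatisfiable subset of some knowledge base (i.e., M is inconsistent and every proper subset is consistent), then I_D(M) = 1. -/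
/-- A partial MUS-decomposition of `K`: a family of pairwise-disjoint inconsistent
subsets of `K` such that the MUSes of their union are exactly the disjoint union of
the MUSes of the components. -/
def IsPartialMUSdecomp {V : Type} [DecidableEq V] (K : Finset (PropForm V))
    (T : Finset (Finset (PropForm V))) : Prop :=
  (∀ Ki ∈ T, Ki ⊆ K ∧ ¬ Sat Ki) ∧
  (↑T : Set (Finset (PropForm V))).PairwiseDisjoint id ∧
  MUSes (T.sup id) = ⋃ Ki ∈ T, MUSes Ki ∧
  (↑T : Set (Finset (PropForm V))).Pairwise fun A B => Disjoint (MUSes A) (MUSes B)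

/-- The distribution index: maximal cardinality of a partial MUS-decomposition. -/
noncomputable def muD {V : Type} [DecidableEq V] (K : Finset (PropForm V)) : ℕ :=
  sSup {n : ℕ | ∃ T : Finset (Finset (PropForm V)), IsPartialMUSdecomp K T ∧ T.card = n}

open Classical in
/-- The distribution-based inconsistency measure. -/
noncomputable def ID {V : Type} [DecidableEq V] (K : Finset (PropForm V)) : ℕ :=
  if Sat K then 0 else muD K

/-! The only inconsistent subset of a minimal unsatisfiable set `M` is `M` itself, so every partial
MUS-decomposition of `M` has at most one component, and `{M}` is one. -/

theorem IsMUS.eq_of_subset_of_not_sat {V : Type} {M A : Finset (PropForm V)} (hM : IsMUS M)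
    (hAM : A ⊆ M) (hA : ¬ Sat A) : A = M := by
  by_contra hne
  exact hA (hM.2 A (hAM.ssubset_of_ne hne))

theorem isPartialMUSdecomp_singleton {V : Type} [DecidableEq V] {K : Finset (PropForm V)}
    (hK : ¬ Sat K) : IsPartialMUSdecomp K {K} := by
  refine ⟨?_, ?_, ?_, ?_⟩ <;> simp [hK]

theorem IsPartialMUSdecomp.card_le_one_of_isMUS {V : Type} [DecidableEq V]
    {M : Finset (PropForm V)} {T : Finset (Finset (PropForm V))} (hM : IsMUS M)
    (hT : IsPartialMUSdecomp M T) : T.card ≤ 1 :=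
  Finset.card_le_one.mpr fun A hA B hB =>
    (hM.eq_of_subset_of_not_sat (hT.1 A hA).1 (hT.1 A hA).2).trans
      (hM.eq_of_subset_of_not_sat (hT.1 B hB).1 (hT.1 B hB).2).symm

theorem IsMUS.muD_eq_one {V : Type} [DecidableEq V] {M : Finset (PropForm V)} (hM : IsMUS M) :
    muD M = 1 := by
  have hone : 1 ∈ {n : ℕ | ∃ T : Finset (Finset (PropForm V)),
      IsPartialMUSdecomp M T ∧ T.card = n} :=
    ⟨{M}, isPartialMUSdecomp_singleton hM.1, Finset.card_singleton M⟩
  have hbound : ∀ n ∈ {n : ℕ | ∃ T : Finset (Finset (PropForm V)),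
      IsPartialMUSdecomp M T ∧ T.card = n}, n ≤ 1 := by
    rintro n ⟨T, hT, rfl⟩
    exact hT.card_le_one_of_isMUS hM
  exact le_antisymm (csSup_le ⟨1, hone⟩ hbound) (le_csSup ⟨1, hbound⟩ hone)

theorem stmt14 {V : Type} [DecidableEq V] (M : Finset (PropForm V)) (hM : IsMUS M) :
    ID M = 1 := by
  simp [ID, hM.1, hM.muD_eq_one]
end

section
/- Reduction from set packing to closed set packing: let U be a finite universe, S = {S₁,…,Sₙ} a family of subsets of U, and e₁,…,eₙ distinct elements not in U. Define U' = U ∪ {e₁,…,eₙ} and S' = {S₁ ∪ {e₁}, …, Sₙ ∪ {eₙ}}. Then P ⊆ S is a maximum-cardinality set packing of (U,S) if and only if P' = {Sᵢ ∪ {eᵢ} : Sᵢ ∈ P} is a maximum-cardinality closed set packing of (U', S'). -/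
/-- `P` (a set of indices) is a set packing of the family `S`: the selected sets are
pairwise disjoint. -/
def IsSetPacking {α : Type} [DecidableEq α] {n : ℕ} (S : Fin n → Finset α)
    (P : Finset (Fin n)) : Prop :=
  ∀ i ∈ P, ∀ j ∈ P, i ≠ j → Disjoint (S i) (S j)

/-- A closed set packing: a set packing such that no unselected member of the family
is contained in the union of the selected ones. -/
def IsClosedSetPacking {α : Type} [DecidableEq α] {n : ℕ} (S : Fin n → Finset α)
    (P : Finset (Fin n)) : Prop :=
  IsSetPacking S P ∧ ∀ j, j ∉ P → ¬ S j ⊆ P.sup S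

/-- A maximum-cardinality set packing. -/
def IsMaxSetPacking {α : Type} [DecidableEq α] {n : ℕ} (S : Fin n → Finset α)
    (P : Finset (Fin n)) : Prop :=
  IsSetPacking S P ∧ ∀ Q, IsSetPacking S Q → Q.card ≤ P.card

/-- A maximum-cardinality closed set packing. -/
def IsMaxClosedSetPacking {α : Type} [DecidableEq α] {n : ℕ} (S : Fin n → Finset α)
    (P : Finset (Fin n)) : Prop :=
  IsClosedSetPacking S P ∧ ∀ Q, IsClosedSetPacking S Q → Q.card ≤ P.card

/-!
Each fresh element `e i` lies in exactly one set of the new family, so adding them creates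
no new intersections and the packings of the two families are the same. A set with a private
element never lies inside the union of other sets, so every packing of the new family is
closed, and its maximum packings and maximum closed packings coincide.
-/

section SetPacking

variable {α : Type} [DecidableEq α] {n : ℕ}

theorem not_subset_sup_of_private_mem {S : Fin n → Finset α} {P : Finset (Fin n)} {j : Fin n}
    {a : α} (ha : a ∈ S j) (hpriv : ∀ i ≠ j, a ∉ S i) (hj : j ∉ P) : ¬ S j ⊆ P.sup S := by
  intro hsub
  obtain ⟨i, hi, hai⟩ := Finset.mem_sup.mp (hsub ha)
  exact hpriv i (ne_of_mem_of_not_mem hi hj) hai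

theorem isClosedSetPacking_iff_of_private {S : Fin n → Finset α}
    (hpriv : ∀ j, ∃ a ∈ S j, ∀ i ≠ j, a ∉ S i) (P : Finset (Fin n)) :
    IsClosedSetPacking S P ↔ IsSetPacking S P := by
  refine ⟨And.left, fun hP => ⟨hP, fun j hj => ?_⟩⟩
  obtain ⟨a, ha, haj⟩ := hpriv j
  exact not_subset_sup_of_private_mem ha haj hj

theorem isMaxClosedSetPacking_iff_of_private {S : Fin n → Finset α}
    (hpriv : ∀ j, ∃ a ∈ S j, ∀ i ≠ j, a ∉ S i) (P : Finset (Fin n)) :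
    IsMaxClosedSetPacking S P ↔ IsMaxSetPacking S P := by
  simp only [IsMaxClosedSetPacking, IsMaxSetPacking, isClosedSetPacking_iff_of_private hpriv]

section FreshElements

variable {S : Fin n → Finset α} {e : Fin n → α}

theorem private_mem_insert_of_fresh (he : Function.Injective e) (hfresh : ∀ i j, e i ∉ S j)
    (j : Fin n) : ∃ a ∈ insert (e j) (S j), ∀ i ≠ j, a ∉ insert (e i) (S i) := by
  refine ⟨e j, Finset.mem_insert_self _ _, fun i hij hmem => ?_⟩
  rcases Finset.mem_insert.mp hmem with h | h
  · exact hij (he h).symm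
  · exact hfresh j i h

theorem disjoint_insert_insert_iff_of_fresh (he : Function.Injective e)
    (hfresh : ∀ i j, e i ∉ S j) {i j : Fin n} (hij : i ≠ j) :
    Disjoint (insert (e i) (S i)) (insert (e j) (S j)) ↔ Disjoint (S i) (S j) := by
  rw [Finset.disjoint_insert_left, Finset.disjoint_insert_right, Finset.mem_insert]
  simp [he.ne hij, hfresh]

theorem isSetPacking_insert_iff_of_fresh (he : Function.Injective e)
    (hfresh : ∀ i j, e i ∉ S j) (Q : Finset (Fin n)) :
    IsSetPacking (fun i => insert (e i) (S i)) Q ↔ IsSetPacking S Q := by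
  unfold IsSetPacking
  refine forall₄_congr fun i _ j _ => forall_congr' fun hij => ?_
  exact disjoint_insert_insert_iff_of_fresh he hfresh hij

end FreshElements

end SetPacking

theorem stmt18 {α : Type} [DecidableEq α] {n : ℕ} (U : Finset α)
    (S : Fin n → Finset α) (hS : ∀ i, S i ⊆ U)
    (e : Fin n → α) (he : Function.Injective e) (heU : ∀ i, e i ∉ U)
    (P : Finset (Fin n)) :
    IsMaxSetPacking S P ↔ IsMaxClosedSetPacking (fun i => insert (e i) (S i)) P := by
  have hfresh : ∀ i j, e i ∉ S j := fun i j h => heU i (hS j h)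
  rw [isMaxClosedSetPacking_iff_of_private (private_mem_insert_of_fresh he hfresh)]
  simp only [IsMaxSetPacking, isSetPacking_insert_iff_of_fresh he hfresh]
end
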